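/- Among all contracts {(εᵢ, rᵢ)} with fixed privacy budgets ε₁ ≥ … ≥ ε_N > 0 satisfying IR and IC, the recursively defined rewards r_N* = μ_N ε_N, r_i* = r_{i+1}* + μᵢ(εᵢ − ε_{i+1}) are pointwise minimal: any feasible reward vector (r₁, …, r_N) satisfies rᵢ ≥ rᵢ* for all i. -/
import Mathlib


/-- Pointwise minimality of the recursively-defined rewards: for fixed privacy budgets
`ε₁ ≥ … ≥ ε_N > 0` and `0 < μ₁ ≤ … ≤ μ_N`, any reward vector `r` satisfying IR and IC
dominates the recursive rewards `r*` given by `r_N* = μ_N ε_N`,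
`r_i* = r_{i+1}* + μᵢ(εᵢ − ε_{i+1})`: `rᵢ ≥ rᵢ*` for all `i`. -/
theorem stmt18 (N : ℕ) (hN : 0 < N) (μ ε r rstar : Fin N → ℝ)
    (hμpos : ∀ i, 0 < μ i) (hμmono : ∀ i j : Fin N, i ≤ j → μ i ≤ μ j)
    (hεpos : ∀ i, 0 < ε i) (hεanti : ∀ i j : Fin N, i ≤ j → ε j ≤ ε i)
    (hlast : rstar ⟨N - 1, by omega⟩ = μ ⟨N - 1, by omega⟩ * ε ⟨N - 1, by omega⟩)
    (hrec : ∀ (i : ℕ) (h : i + 1 < N),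
      rstar ⟨i, by omega⟩ = rstar ⟨i + 1, h⟩
        + μ ⟨i, by omega⟩ * (ε ⟨i, by omega⟩ - ε ⟨i + 1, h⟩))
    (hIR : ∀ i : Fin N, μ i * ε i ≤ r i)
    (hIC : ∀ i j : Fin N, i ≠ j → r j - μ i * ε j ≤ r i - μ i * ε i) :
    ∀ i : Fin N, rstar i ≤ r i := by
  have key : ∀ d i : ℕ, ∀ h : i < N, i + d + 1 = N → rstar ⟨i, h⟩ ≤ r ⟨i, h⟩ := by
    intro d
    induction d with
    | zero =>
      intro i h hi
      have : i = N - 1 := by omega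
      subst this
      rw [hlast]
      exact hIR _
    | succ d ih =>
      intro i h hi
      have h1 : i + 1 < N := by omega
      have hIH : rstar ⟨i + 1, h1⟩ ≤ r ⟨i + 1, h1⟩ := ih (i + 1) h1 (by omega)
      rw [hrec i h1]
      have hic := hIC ⟨i, h⟩ ⟨i + 1, h1⟩ (by simp [Fin.ext_iff])
      nlinarith [hic, hIH]
  intro i
  exact key (N - 1 - i.1) i.1 i.2 (by omega)
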